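/- arXiv:0704.0277 — 3 statements merged into one kernel-verified Lean document; each statement's English description precedes it below -/
import Mathlib

section
/- In the example of the previous context, the complex X = ⋃_{k=1}^r X_k has rational Leray number L(X) = d − 1, and the projection π satisfies r(X,π) = max_{x∈|X|} |π^{-1}(π(x))| = r; consequently the bound L(π(X)) ≤ r·L(X) + r − 1 is attained with equality, since L(π(X)) = rd − 1 = r(d−1) + r − 1. -/
open Classical in
/-- A (possibly abstract) simplicial complex: a set of finsets closed under taking subsets. -/
def IsComplex {V : Type*} (X : Set (Finset V)) : Prop := ∀ s ∈ X, ∀ t ⊆ s, t ∈ X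

/-- Ordered `n`-tuples of vertices spanning a simplex of `X` (repetitions allowed). -/
def Tup {V : Type*} [DecidableEq V] (X : Set (Finset V)) (n : ℕ) : Type _ :=
  {σ : Fin n → V // Finset.image σ Finset.univ ∈ X}

/-- Rational ordered simplicial chains on tuples of `n` vertices. -/
abbrev Chains {V : Type*} [DecidableEq V] (X : Set (Finset V)) (n : ℕ) := Tup X n →₀ ℚ

open Classical in
noncomputable def gen {V : Type*} [DecidableEq V] (X : Set (Finset V)) {n : ℕ}
    (τ : Fin n → V) : Chains X n :=
  if h : Finset.image τ Finset.univ ∈ X then Finsupp.single ⟨τ, h⟩ 1 else 0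

/-- The simplicial boundary map. -/
noncomputable def bdry {V : Type*} [DecidableEq V] (X : Set (Finset V)) (n : ℕ) :
    Chains X (n + 1) →ₗ[ℚ] Chains X n :=
  Finsupp.lsum ℚ fun σ => LinearMap.toSpanSingleton ℚ (Chains X n)
    (∑ i : Fin (n + 1), ((-1 : ℚ) ^ (i : ℕ)) • gen X (σ.1 ∘ i.succAbove))

/-- Reduced rational homology `H̃_i(X;ℚ)` (chains on `i+1` vertices correspond to
`i`-dimensional simplices; tuples with `0` vertices give the augmentation). -/
noncomputable abbrev reducedHomology {V : Type*} [DecidableEq V] (X : Set (Finset V)) (i : ℕ) :=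
  LinearMap.ker (bdry X i) ⧸
    Submodule.comap (LinearMap.ker (bdry X i)).subtype (LinearMap.range (bdry X (i + 1)))

/-- `H̃_i(X;ℚ) = 0`. -/
def HomologyVanishes {V : Type*} [DecidableEq V] (X : Set (Finset V)) (i : ℕ) : Prop :=
  ∀ x : reducedHomology X i, x = 0

/-- The induced subcomplex on a vertex subset. -/
def induced {V : Type*} (X : Set (Finset V)) (S : Finset V) : Set (Finset V) :=
  {s ∈ X | s ⊆ S}

/-- The rational Leray number `L(X)`. -/
noncomputable def lerayNumber {V : Type*} [DecidableEq V] (X : Set (Finset V)) : ℕ :=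
  sInf {d | ∀ S : Finset V, ∀ i, d ≤ i → HomologyVanishes (induced X S) i}

/-- The geometric realization of a complex `X`: convex-combination weight functions whose
support is a simplex of `X`. -/
def geomPt {V : Type*} [Fintype V] (X : Set (Finset V)) : Type _ :=
  {f : V → ℝ // (∀ v, 0 ≤ f v) ∧ (∑ v, f v) = 1 ∧ ∃ s ∈ X, ∀ v, f v ≠ 0 ↔ v ∈ s}

/-- The affine extension of the vertex projection `p` to the geometric realization. -/
noncomputable def projPt {V : Type*} [Fintype V] {m : ℕ} (p : V → Fin m) (f : V → ℝ) :
    Fin m → ℝ :=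
  fun i => ∑ v ∈ Finset.univ.filter (fun v => p v = i), f v

/-- The image complex `π(X)` under the simplicial projection induced by `p`. -/
def imageComplex {V : Type*} [DecidableEq V] {m : ℕ} (p : V → Fin m)
    (X : Set (Finset V)) : Set (Finset (Fin m)) :=
  {t : Finset (Fin m) | ∃ s ∈ X, t = s.image p}

/-- The complex `X = ⋃_k X_k` of the example: `X_k` is the join of the full simplices on
`A_t × {k}` (`t ≠ k`) and the boundary of the simplex on `A_k × {k}`; concretely, a simplex of
`X_k` is a set of vertices of second coordinate `k` missing some vertex `(i,k)` with
`i ∈ A k`. -/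
def exampleCplx {r m : ℕ} (A : Fin r → Finset (Fin m)) :
    Set (Finset (Fin m × Fin r)) :=
  ⋃ k : Fin r, {σ : Finset (Fin m × Fin r) |
    (∀ v ∈ σ, v.2 = k) ∧ ∃ i ∈ A k, (i, k) ∉ σ}

variable {V : Type*} [DecidableEq V] {X : Set (Finset V)}

lemma im_comp_subset {n k : ℕ} (τ : Fin n → V) (g : Fin k → Fin n) :
    Finset.image (τ ∘ g) Finset.univ ⊆ Finset.image τ Finset.univ := by
  intro x hx
  simp only [Finset.mem_image, Finset.mem_univ, true_and] at *
  obtain ⟨a, rfl⟩ := hx; exact ⟨g a, rfl⟩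

lemma bdry_single {n : ℕ} (σ : Tup X (n+1)) (c : ℚ) :
    bdry X n (Finsupp.single σ c) =
      c • ∑ i : Fin (n + 1), ((-1 : ℚ) ^ (i : ℕ)) • gen X (σ.1 ∘ i.succAbove) := by
  simp [bdry, Finsupp.lsum_single, LinearMap.toSpanSingleton_apply]

lemma gen_eq_single {n : ℕ} (τ : Fin n → V) (h : Finset.image τ Finset.univ ∈ X) :
    gen X τ = @Finsupp.single (Tup X n) ℚ _ ⟨τ, h⟩ 1 := dif_pos h

lemma bdry_gen {n : ℕ} (τ : Fin (n+1) → V) (h : Finset.image τ Finset.univ ∈ X) :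
    bdry X n (gen X τ) =
      ∑ i : Fin (n + 1), ((-1 : ℚ) ^ (i : ℕ)) • gen X (τ ∘ i.succAbove) := by
  rw [gen_eq_single τ h]; exact (bdry_single (X := X) ⟨τ, h⟩ 1).trans (one_smul ℚ _)
lemma succAbove_succAbove {n : ℕ} (i j : Fin (n+1)) (h : i ≤ j) (k : Fin n) :
    (j.succ).succAbove (i.succAbove k) = (i.castSucc).succAbove (j.succAbove k) := by
  rcases i with ⟨i, hi⟩; rcases j with ⟨j, hj⟩; rcases k with ⟨k, hk⟩
  simp only [Fin.succAbove, Fin.lt_def, Fin.le_def] at *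
  split_ifs <;> (apply Fin.ext) <;> simp_all <;> omega

def swapIdx {n : ℕ} (p : Fin (n+2) × Fin (n+1)) : Fin (n+2) × Fin (n+1) :=
  if h : (p.1 : ℕ) ≤ (p.2 : ℕ) then
    (p.2.succ, p.1.castLT (by omega))
  else
    (p.2.castSucc, p.1.pred (by intro h0; apply h; rw [h0]; simp))

lemma swapIdx_pos {n : ℕ} (p : Fin (n+2) × Fin (n+1)) (h : (p.1 : ℕ) ≤ (p.2 : ℕ)) :
    swapIdx p = (p.2.succ, p.1.castLT (by omega)) := dif_pos h

lemma swapIdx_neg {n : ℕ} (p : Fin (n+2) × Fin (n+1)) (h : ¬ (p.1 : ℕ) ≤ (p.2 : ℕ)) :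
    swapIdx p = (p.2.castSucc, p.1.pred (by intro h0; apply h; rw [h0]; simp)) := dif_neg h

lemma double_cancel {n : ℕ} (σ : Fin (n+2) → V) :
    ∑ p : Fin (n+2) × Fin (n+1),
      (((-1 : ℚ) ^ (p.1 : ℕ) * (-1) ^ (p.2 : ℕ)) •
        gen X (σ ∘ p.1.succAbove ∘ p.2.succAbove)) = 0 := by
  apply Finset.sum_ninvolution (g := swapIdx)
  · intro ⟨i, j⟩
    by_cases h : (i : ℕ) ≤ (j : ℕ)
    · rw [swapIdx_pos _ h]
      have hfun : σ ∘ (j.succ).succAbove ∘ (i.castLT (by omega : (i:ℕ) < n+1)).succAbove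
          = σ ∘ i.succAbove ∘ j.succAbove := by
        funext k
        have := succAbove_succAbove (i.castLT (by omega : (i:ℕ) < n+1)) j
          (by simpa [Fin.le_def] using h) k
        simp only [Function.comp_apply]
        rw [this, Fin.castSucc_castLT]
      rw [hfun, ← add_smul]
      have key : ∀ a b : ℕ, ((-1:ℚ)^a*(-1)^b) + ((-1)^(b+1)*(-1)^a) = 0 := by
        intro a b; rw [pow_succ]; ring
      simp only [Fin.val_succ, Fin.coe_castLT]
      rw [key, zero_smul]
    · rw [swapIdx_neg _ h]
      push_neg at h
      have hne : i ≠ 0 := by intro h0; rw [h0] at h; simp at h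
      have hfun : σ ∘ (j.castSucc).succAbove ∘ (i.pred hne).succAbove
          = σ ∘ i.succAbove ∘ j.succAbove := by
        funext k
        have := succAbove_succAbove j (i.pred hne)
          (by simp only [Fin.le_def, Fin.coe_pred]; omega) k
        simp only [Function.comp_apply]
        rw [← this]; congr 2; apply Fin.ext; simp
      rw [hfun, ← add_smul]
      have key : ∀ a b : ℕ, 1 ≤ a → ((-1:ℚ)^a*(-1)^b) + ((-1)^b*(-1)^(a-1)) = 0 := by
        intro a b ha
        obtain ⟨c, rfl⟩ : ∃ c, a = c+1 := ⟨a-1, by omega⟩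
        simp only [Nat.add_sub_cancel, pow_succ]; ring
      simp only [Fin.coe_castSucc, Fin.coe_pred]
      rw [key _ _ (by omega), zero_smul]
  · intro ⟨i, j⟩ _
    by_cases h : (i : ℕ) ≤ (j : ℕ)
    · rw [swapIdx_pos _ h]; simp [Prod.ext_iff, Fin.ext_iff]; omega
    · rw [swapIdx_neg _ h]; simp [Prod.ext_iff, Fin.ext_iff]; omega
  · intro; exact Finset.mem_univ _
  · intro ⟨i, j⟩
    by_cases h : (i : ℕ) ≤ (j : ℕ)
    · rw [swapIdx_pos (i, j) h]
      rw [swapIdx_neg _ (by simp; omega)]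
      simp [Prod.ext_iff, Fin.ext_iff]
    · rw [swapIdx_neg (i, j) h]
      rw [swapIdx_pos _ (by simp; omega)]
      simp [Prod.ext_iff, Fin.ext_iff]

lemma bdry_bdry (hX : IsComplex X) {n : ℕ} (z : Chains X (n+2)) :
    bdry X n (bdry X (n+1) z) = 0 := by
  suffices h : (bdry X n).comp (bdry X (n+1)) = 0 by
    have := congrArg (fun f => f z) (h)
    simpa using this
  apply Finsupp.lhom_ext
  intro σ c
  simp only [LinearMap.comp_apply, LinearMap.zero_apply]
  rw [bdry_single, map_smul, map_sum]
  have hface : ∀ i : Fin (n+2), Finset.image (σ.1 ∘ i.succAbove) Finset.univ ∈ X :=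
    fun i => hX _ σ.2 _ (im_comp_subset _ _)
  have : ∀ i : Fin (n+2), bdry X n (((-1:ℚ) ^ (i:ℕ)) • gen X (σ.1 ∘ i.succAbove)) =
      ∑ j : Fin (n+1), (((-1:ℚ) ^ (i:ℕ) * (-1)^(j:ℕ)) •
        gen X (σ.1 ∘ i.succAbove ∘ j.succAbove)) := by
    intro i
    rw [map_smul, bdry_gen _ (hface i), Finset.smul_sum]
    congr 1; funext j
    rw [smul_smul]
    rfl
  rw [Finset.sum_congr rfl (fun i _ => this i)]
  have := double_cancel (X := X) σ.1
  rw [Fintype.sum_prod_type] at this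
  rw [this, smul_zero]

/-- `z` is supported on tuples whose image satisfies `P`. -/
def InReg {n : ℕ} (P : Finset V → Prop) (z : Chains X n) : Prop :=
  ∀ τ ∈ z.support, P (Finset.image (τ : Tup X n).1 Finset.univ)

lemma InReg_zero {n : ℕ} (P : Finset V → Prop) : InReg P (0 : Chains X n) := by
  intro τ hτ; simp at hτ

lemma InReg_add {n : ℕ} {P : Finset V → Prop} {z w : Chains X n}
    (hz : InReg P z) (hw : InReg P w) : InReg P (z + w) := by
  classical
  intro τ hτ
  rcases Finset.mem_union.mp (Finsupp.support_add hτ) with h | h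
  exacts [hz τ h, hw τ h]

lemma InReg_smul {n : ℕ} {P : Finset V → Prop} {z : Chains X n} (c : ℚ)
    (hz : InReg P z) : InReg P (c • z) := by
  intro τ hτ
  exact hz τ (Finsupp.support_smul hτ)

lemma InReg_neg {n : ℕ} {P : Finset V → Prop} {z : Chains X n}
    (hz : InReg P z) : InReg P (-z) := by
  have := InReg_smul (-1) hz; simpa using this

lemma InReg_sum {n : ℕ} {P : Finset V → Prop} {ι : Type*} (s : Finset ι)
    (f : ι → Chains X n) (h : ∀ i ∈ s, InReg P (f i)) : InReg P (∑ i ∈ s, f i) := by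
  classical
  induction s using Finset.induction with
  | empty => simpa using InReg_zero P
  | insert a s' hni ih =>
    rw [Finset.sum_insert hni]
    exact InReg_add (h a (Finset.mem_insert_self a s'))
      (ih fun i hi => h i (Finset.mem_insert_of_mem hi))

lemma InReg_single {n : ℕ} {P : Finset V → Prop} (τ : Tup X n) (c : ℚ)
    (h : P (Finset.image τ.1 Finset.univ)) : InReg P (Finsupp.single τ c) := by
  intro ρ hρ
  have := Finsupp.support_single_subset hρ
  simp only [Finset.mem_singleton] at this
  subst this; exact h

lemma InReg_gen {n : ℕ} {P : Finset V → Prop} (τ : Fin n → V)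
    (h : P (Finset.image τ Finset.univ)) : InReg P (gen X τ) := by
  by_cases hmem : Finset.image τ Finset.univ ∈ X
  · rw [gen_eq_single τ hmem]; exact InReg_single _ _ h
  · rw [show gen X τ = 0 from dif_neg hmem]; exact InReg_zero P

lemma InReg_bdry {n : ℕ} {P : Finset V → Prop}
    (hPdc : ∀ s t, P s → t ⊆ s → P t) {z : Chains X (n+1)}
    (hz : InReg P z) : InReg P (bdry X n z) := by
  have hz' : bdry X n z = ∑ σ ∈ z.support, bdry X n (Finsupp.single σ (z σ)) := by
    conv_lhs => rw [← Finsupp.sum_single z]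
    rw [Finsupp.sum, map_sum]
  rw [hz']
  apply InReg_sum
  intro σ hσ
  rw [bdry_single]
  apply InReg_smul
  apply InReg_sum
  intro i _
  exact InReg_smul _ (InReg_gen _ (hPdc _ _ (hz σ hσ) (im_comp_subset _ _)))

/-- image of a `Fin.cons` tuple -/
lemma image_cons {n : ℕ} (v : V) (τ : Fin n → V) :
    Finset.image (Fin.cons v τ : Fin (n+1) → V) Finset.univ =
      insert v (Finset.image τ Finset.univ) := by
  ext x
  simp only [Finset.mem_image, Finset.mem_univ, true_and, Finset.mem_insert]
  constructor
  · rintro ⟨k, rfl⟩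
    rcases Fin.eq_zero_or_eq_succ k with rfl | ⟨j, rfl⟩
    · left; simp
    · right; exact ⟨j, by simp⟩
  · rintro (rfl | ⟨k, rfl⟩)
    · exact ⟨0, by simp⟩
    · exact ⟨k.succ, by simp⟩

lemma cons_comp_succAbove_zero {n : ℕ} (v : V) (τ : Fin (n+1) → V) :
    (Fin.cons v τ : Fin (n+2) → V) ∘ (0 : Fin (n+2)).succAbove = τ := by
  funext k
  simp [Fin.succAbove_zero]

lemma cons_comp_succAbove_succ {n : ℕ} (v : V) (τ : Fin (n+1) → V) (j : Fin (n+1)) :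
    (Fin.cons v τ : Fin (n+2) → V) ∘ (j.succ).succAbove =
      Fin.cons v (τ ∘ j.succAbove) := by
  funext k
  rcases Fin.eq_zero_or_eq_succ k with rfl | ⟨l, rfl⟩
  · simp [Fin.succAbove_succ_of_le, Fin.zero_le]
  · simp only [Function.comp_apply, Fin.cons_succ]
    rw [Fin.succ_succAbove_succ]
    simp

/-- The cone operator `τ ↦ v * τ`. -/
noncomputable def coneOp (X : Set (Finset V)) (v : V) (n : ℕ) :
    Chains X n →ₗ[ℚ] Chains X (n+1) :=
  Finsupp.lsum ℚ (fun τ => LinearMap.toSpanSingleton ℚ (Chains X (n+1))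
    (gen X (Fin.cons v τ.1)))

lemma coneOp_single {n : ℕ} (v : V) (τ : Tup X n) (c : ℚ) :
    coneOp X v n (Finsupp.single τ c) = c • gen X (Fin.cons v τ.1) := by
  simp [coneOp, Finsupp.lsum_single, LinearMap.toSpanSingleton_apply]

lemma coneOp_gen {n : ℕ} (v : V) (ρ : Fin n → V) (hρ : Finset.image ρ Finset.univ ∈ X) :
    coneOp X v n (gen X ρ) = gen X (Fin.cons v ρ) := by
  rw [gen_eq_single ρ hρ]; exact (coneOp_single (X := X) v ⟨ρ, hρ⟩ 1).trans (one_smul ℚ _)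

/-- The cone contraction: if every simplex of the region `P` can be coned off by `v`
inside the region, every cycle supported in `P` is a boundary supported in `P`. -/
lemma cone_contract (hX : IsComplex X) (P : Finset V → Prop)
    (hPX : ∀ s, P s → s ∈ X) (v : V) (hPv : ∀ s, P s → P (insert v s))
    {i : ℕ} (z : Chains X (i+1)) (hz : bdry X i z = 0) (hreg : InReg P z) :
    ∃ w : Chains X (i+2), bdry X (i+1) w = z ∧ InReg P w := by
  classical
  -- key identity on singles in the region
  have key : ∀ (τ : Tup X (i+1)) (c : ℚ), P (Finset.image τ.1 Finset.univ) →
      bdry X (i+1) (coneOp X v (i+1) (Finsupp.single τ c)) +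
        coneOp X v i (bdry X i (Finsupp.single τ c)) = Finsupp.single τ c := by
    intro τ c hP
    have himτ : Finset.image (Fin.cons v τ.1 : Fin (i+2) → V) Finset.univ ∈ X := by
      rw [image_cons]; exact hPX _ (hPv _ hP)
    rw [coneOp_single, map_smul, bdry_gen _ himτ, bdry_single, map_smul]
    have hsum : ∑ l : Fin (i+2), ((-1:ℚ)^(l:ℕ)) •
          gen X ((Fin.cons v τ.1 : Fin (i+2) → V) ∘ l.succAbove)
        = gen X τ.1 + ∑ j : Fin (i+1), ((-1:ℚ)^((j:ℕ)+1)) •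
          gen X (Fin.cons v (τ.1 ∘ j.succAbove)) := by
      rw [Fin.sum_univ_succ]
      congr 1
      · rw [cons_comp_succAbove_zero]; simp
      · congr 1; funext j
        rw [cons_comp_succAbove_succ]
        simp [Fin.val_succ]
    rw [hsum]
    have hmap : coneOp X v i (∑ j : Fin (i+1), ((-1:ℚ)^(j:ℕ)) • gen X (τ.1 ∘ j.succAbove))
        = ∑ j : Fin (i+1), ((-1:ℚ)^(j:ℕ)) • gen X (Fin.cons v (τ.1 ∘ j.succAbove)) := by
      rw [map_sum]
      congr 1; funext j
      rw [map_smul, coneOp_gen _ _ (hX _ τ.2 _ (im_comp_subset _ _))]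
    rw [hmap, gen_eq_single τ.1 τ.2]
    have hττ : (⟨τ.1, τ.2⟩ : Tup X (i+1)) = τ := rfl
    rw [hττ]
    have : ∀ j : Fin (i+1), ((-1:ℚ)^((j:ℕ)+1)) • gen X (Fin.cons v (τ.1 ∘ j.succAbove))
        = -(((-1:ℚ)^(j:ℕ)) • gen X (Fin.cons v (τ.1 ∘ j.succAbove))) := by
      intro j; rw [pow_succ]; module
    rw [Finset.sum_congr rfl (fun j _ => this j), Finset.sum_neg_distrib]
    rw [smul_add, smul_neg]
    rw [Finsupp.smul_single, smul_eq_mul, mul_one]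
    abel
  -- now sum over the support of `z`
  have hzdec : z = ∑ σ ∈ z.support, Finsupp.single σ (z σ) := by
    conv_lhs => rw [← Finsupp.sum_single z]; rw [Finsupp.sum]
  refine ⟨coneOp X v (i+1) z, ?_, ?_⟩
  · have : bdry X (i+1) (coneOp X v (i+1) z) + coneOp X v i (bdry X i z) = z := by
      conv_lhs => rw [hzdec]
      conv_rhs => rw [hzdec]
      rw [map_sum, map_sum, map_sum, map_sum, ← Finset.sum_add_distrib]
      exact Finset.sum_congr rfl (fun σ hσ => key σ (z σ) (hreg σ hσ))
    rw [hz, map_zero, add_zero] at this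
    exact this
  · -- support of the cone
    intro ρ hρ
    have hsup : (coneOp X v (i+1) z).support ⊆
        z.support.biUnion (fun σ => (gen X (Fin.cons v σ.1) : Chains X (i+2)).support) := by
      intro a ha
      have : coneOp X v (i+1) z = ∑ σ ∈ z.support, (z σ) • gen X (Fin.cons v σ.1) := by
        conv_lhs => rw [hzdec]
        rw [map_sum]
        exact Finset.sum_congr rfl (fun σ _ => coneOp_single v σ (z σ))
      rw [this] at ha
      have := Finset.mem_biUnion.mp (Finsupp.support_finset_sum ha)
      obtain ⟨σ, hσ, ha'⟩ := this
      exact Finset.mem_biUnion.mpr ⟨σ, hσ, Finsupp.support_smul ha'⟩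
    obtain ⟨σ, hσ, hρ'⟩ := Finset.mem_biUnion.mp (hsup hρ)
    by_cases hmem : Finset.image (Fin.cons v σ.1 : Fin (i+2) → V) Finset.univ ∈ X
    · rw [gen_eq_single _ hmem] at hρ'
      have := Finsupp.support_single_subset hρ'
      replace this := Finset.mem_singleton.mp this
      subst this
      simpa [image_cons] using hPv _ (hreg σ hσ)
    · rw [show gen X (Fin.cons v σ.1) = (0 : Chains X (i+2)) from dif_neg hmem] at hρ'
      simp at hρ'

lemma InReg_mono {n : ℕ} {P P' : Finset V → Prop} (h : ∀ s, P s → P' s)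
    {z : Chains X n} (hz : InReg P z) : InReg P' z :=
  fun τ hτ => h _ (hz τ hτ)

lemma InReg_sub {n : ℕ} {P : Finset V → Prop} {z w : Chains X n}
    (hz : InReg P z) (hw : InReg P w) : InReg P (z - w) := by
  rw [sub_eq_add_neg]; exact InReg_add hz (InReg_neg hw)

/-- Every cycle of degree `≥ N - 1` supported on a region with at most `N` vertices
is a boundary (within the region). -/
lemma small_contract (hX : IsComplex X) :
    ∀ (N : ℕ) (P : Finset V → Prop) (T : Finset V),
    (∀ s, P s → s ∈ X) → (∀ s t, P s → t ⊆ s → P t) → (∀ s, P s → s ⊆ T) →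
    T.card ≤ N →
    ∀ (i : ℕ), N ≤ i + 1 →
    ∀ z : Chains X (i+1), bdry X i z = 0 → InReg P z →
    ∃ w : Chains X (i+2), bdry X (i+1) w = z ∧ InReg P w := by
  intro N
  induction N with
  | zero =>
    intro P T hPX hPdc hPT hT i _ z hz hreg
    have hz0 : z = 0 := by
      ext τ
      by_contra hne
      have hτ : τ ∈ z.support := Finsupp.mem_support_iff.mpr (by simpa using hne)
      have h1 : Finset.image τ.1 Finset.univ ⊆ T := hPT _ (hreg τ hτ)
      have h2 : τ.1 0 ∈ Finset.image τ.1 Finset.univ := Finset.mem_image_of_mem _ (Finset.mem_univ _)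
      have := h1 h2
      rw [Finset.card_eq_zero.mp (Nat.le_zero.mp hT)] at this
      simp at this
    exact ⟨0, by simp [hz0], InReg_zero P⟩
  | succ N IH =>
    intro P T hPX hPdc hPT hT i hi z hz hreg
    by_cases hTN : T.card ≤ N
    · exact IH P T hPX hPdc hPT hTN i (by omega) z hz hreg
    -- `T` has exactly `N+1` elements; pick a vertex `v`
    obtain ⟨v, hv⟩ : ∃ v, v ∈ T := Finset.Nonempty.exists_mem (Finset.card_pos.mp (by omega))
    rcases i with _ | i'
    · -- `i = 0`, so `N = 0` and `T = {v}`
      have hT1 : T.card = 1 := by omega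
      have hTv : T = {v} := Finset.eq_singleton_iff_unique_mem.mpr
        ⟨hv, fun x hx => by
          have := Finset.card_le_one.mp (le_of_eq hT1)
          exact this x hx v hv⟩
      by_cases hPv : P {v}
      · exact cone_contract hX P hPX v
          (fun s hs => by
            have hsv : s ⊆ {v} := hTv ▸ hPT s hs
            rcases Finset.subset_singleton_iff.mp hsv with rfl | rfl
            · simpa using hPv
            · simpa using hPv) z hz hreg
      · have hz0 : z = 0 := by
          ext τ
          by_contra hne
          have hτ : τ ∈ z.support := Finsupp.mem_support_iff.mpr (by simpa using hne)
          have h1 : Finset.image τ.1 Finset.univ ⊆ {v} := hTv ▸ hPT _ (hreg τ hτ)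
          have h2 : τ.1 0 ∈ Finset.image τ.1 Finset.univ :=
            Finset.mem_image_of_mem _ (Finset.mem_univ _)
          have him : Finset.image τ.1 Finset.univ = {v} := by
            apply Finset.Subset.antisymm h1
            intro x hx
            rcases Finset.mem_singleton.mp (h1 h2) with h'
            simp only [Finset.mem_singleton] at hx ⊢
            rw [hx, ← h']; exact h2
          exact hPv (him ▸ hreg τ hτ)
        exact ⟨0, by simp [hz0], InReg_zero P⟩
    · -- main Mayer–Vietoris style step, `i = i' + 1`
      classical
      set a : Chains X (i'+2) := Finsupp.filter (fun τ => v ∈ Finset.image τ.1 Finset.univ) z with ha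
      set b : Chains X (i'+2) := Finsupp.filter (fun τ => ¬ v ∈ Finset.image τ.1 Finset.univ) z with hb
      have hab : a + b = z := Finsupp.filter_pos_add_filter_neg z _
      have hsupa : a.support ⊆ z.support := by
        rw [ha, Finsupp.support_filter]; exact Finset.filter_subset _ _
      have hsupb : b.support ⊆ z.support := by
        rw [hb, Finsupp.support_filter]; exact Finset.filter_subset _ _
      -- the region `Q` for the star of `v`
      set Q : Finset V → Prop := fun s => P (insert v s) with hQ
      have hQX : ∀ s, Q s → s ∈ X := fun s hs =>
        hX _ (hPX _ hs) _ (Finset.subset_insert _ _)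
      have hQdc : ∀ s t, Q s → t ⊆ s → Q t := fun s t hs hts =>
        hPdc _ _ hs (Finset.insert_subset_insert _ hts)
      have hQcone : ∀ s, Q s → Q (insert v s) := fun s hs => by
        show P (insert v (insert v s))
        rw [Finset.insert_idem]; exact hs
      have hQP : ∀ s, Q s → P s := fun s hs =>
        hPdc _ _ hs (Finset.subset_insert _ _)
      have hrega : InReg Q a := by
        intro τ hτ
        have h1 : P (Finset.image τ.1 Finset.univ) := hreg τ (hsupa hτ)
        have h2 : v ∈ Finset.image τ.1 Finset.univ := by
          rw [ha, Finsupp.support_filter, Finset.mem_filter] at hτ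
          exact hτ.2
        show P (insert v (Finset.image τ.1 Finset.univ))
        rwa [Finset.insert_eq_self.mpr h2]
      have hregb : InReg (fun s => P s ∧ v ∉ s) b := by
        intro τ hτ
        refine ⟨hreg τ (hsupb hτ), ?_⟩
        rw [hb, Finsupp.support_filter, Finset.mem_filter] at hτ
        exact hτ.2
      -- the connecting cycle `c`
      set c : Chains X (i'+1) := bdry X (i'+1) a with hc
      have hcb : c = - bdry X (i'+1) b := by
        have h0 : bdry X (i'+1) (a + b) = 0 := by rw [hab]; exact hz
        rw [map_add] at h0
        rw [hc]
        exact eq_neg_of_add_eq_zero_left h0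
      have hccyc : bdry X i' c = 0 := bdry_bdry hX a
      have hregc : InReg (fun s => Q s ∧ v ∉ s) c := by
        intro τ hτ
        constructor
        · exact InReg_bdry hQdc hrega τ hτ
        · have : InReg (fun s => v ∉ s) (bdry X (i'+1) b) :=
            InReg_bdry (fun s t hs hts hmem => hs (hts hmem))
              (InReg_mono (fun s hs => hs.2) hregb)
          have hneg : InReg (fun s => v ∉ s) (- bdry X (i'+1) b) := InReg_neg this
          rw [hcb] at hτ
          exact hneg τ hτ
      -- contract `c` inside the link region
      obtain ⟨w, hwc, hwreg⟩ := IH (fun s => Q s ∧ v ∉ s) (T.erase v)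
        (fun s hs => hQX s hs.1)
        (fun s t hs hts => ⟨hQdc _ _ hs.1 hts, fun hm => hs.2 (hts hm)⟩)
        (fun s hs => Finset.subset_erase.mpr ⟨hPT s (hQP s hs.1), hs.2⟩)
        (by rw [Finset.card_erase_of_mem hv]; omega)
        i' (by omega) c hccyc hregc
      -- contract `a - w` inside the star (cone) region
      have hawcyc : bdry X (i'+1) (a - w) = 0 := by
        rw [map_sub, ← hc, hwc, sub_self]
      have hawreg : InReg Q (a - w) :=
        InReg_sub hrega (InReg_mono (fun s hs => hs.1) hwreg)
      obtain ⟨u, huaw, hureg⟩ := cone_contract hX Q hQX v hQcone (a - w) hawcyc hawreg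
      -- contract `b + w` inside the complement of `v`
      have hbwcyc : bdry X (i'+1) (b + w) = 0 := by
        rw [map_add, hwc, hcb]
        abel
      have hbwreg : InReg (fun s => P s ∧ v ∉ s) (b + w) :=
        InReg_add hregb (InReg_mono (fun s hs => ⟨hQP s hs.1, hs.2⟩) hwreg)
      obtain ⟨u', hubw, hu'reg⟩ := IH (fun s => P s ∧ v ∉ s) (T.erase v)
        (fun s hs => hPX s hs.1)
        (fun s t hs hts => ⟨hPdc _ _ hs.1 hts, fun hm => hs.2 (hts hm)⟩)
        (fun s hs => Finset.subset_erase.mpr ⟨hPT s hs.1, hs.2⟩)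
        (by rw [Finset.card_erase_of_mem hv]; omega)
        (i'+1) (by omega) (b + w) hbwcyc hbwreg
      refine ⟨u + u', ?_, ?_⟩
      · rw [map_add, huaw, hubw, ← hab]
        abel
      · exact InReg_add (InReg_mono hQP hureg) (InReg_mono (fun s hs => hs.1) hu'reg)

lemma homologyVanishes_iff {i : ℕ} :
    HomologyVanishes X i ↔
      ∀ z : Chains X (i+1), bdry X i z = 0 → ∃ w, bdry X (i+1) w = z := by
  constructor
  · intro h z hz
    have hx := h (Submodule.Quotient.mk ⟨z, hz⟩)
    rw [Submodule.Quotient.mk_eq_zero, Submodule.mem_comap] at hx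
    obtain ⟨w, hw⟩ := hx
    exact ⟨w, hw⟩
  · intro h x
    obtain ⟨y, rfl⟩ := Submodule.Quotient.mk_surjective _ x
    rw [Submodule.Quotient.mk_eq_zero, Submodule.mem_comap]
    obtain ⟨w, hw⟩ := h y.1 y.2
    exact ⟨w, hw⟩

/-- `X` consists of the proper faces of the simplex on `T` (plus possibly nothing else);
then `H̃_{|T|-2}(X) ≠ 0`. -/
lemma boundary_nonvanish {N : ℕ} (T : Finset V) (ρ : Fin (N+2) → V)
    (hρinj : Function.Injective ρ) (hρim : Finset.image ρ Finset.univ = T)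
    (hXT : ∀ s ∈ X, s ⊆ T ∧ s ≠ T) (hT : ∀ s, s ⊆ T → s ≠ T → s ∈ X) :
    ¬ HomologyVanishes X N := by
  classical
  have hcardT : T.card = N + 2 := by
    rw [← hρim, Finset.card_image_of_injective _ hρinj, Finset.card_univ, Fintype.card_fin]
  -- the test functional
  set dv : (Fin (N+1) → V) → ℚ := fun τ =>
    Matrix.det (Matrix.of fun l x : Fin (N+1) => if τ l = ρ x.succ then (1:ℚ) else 0) with hdv
  set φ : Chains X (N+1) →ₗ[ℚ] ℚ :=
    Finsupp.lsum ℚ (fun τ => LinearMap.toSpanSingleton ℚ ℚ (dv τ.1)) with hφ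
  have φ_single : ∀ (τ : Tup X (N+1)) (c : ℚ), φ (Finsupp.single τ c) = c * dv τ.1 := by
    intro τ c
    simp [hφ, Finsupp.lsum_single, LinearMap.toSpanSingleton_apply, smul_eq_mul]
  have φ_gen : ∀ (τ : Fin (N+1) → V), Finset.image τ Finset.univ ∈ X →
      φ (gen X τ) = dv τ := by
    intro τ h
    rw [gen_eq_single τ h]; exact (φ_single ⟨τ, h⟩ 1).trans (one_mul _)
  -- membership of proper faces
  have hface : ∀ j : Fin (N+2), Finset.image (ρ ∘ j.succAbove) Finset.univ ∈ X := by
    intro j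
    apply hT
    · exact hρim ▸ im_comp_subset ρ _
    · intro he
      have : ρ j ∈ Finset.image (ρ ∘ j.succAbove) Finset.univ := by
        rw [he, ← hρim]; exact Finset.mem_image_of_mem _ (Finset.mem_univ _)
      simp only [Finset.mem_image, Finset.mem_univ, true_and, Function.comp_apply] at this
      obtain ⟨k, hk⟩ := this
      exact j.succAbove_ne k (hρinj hk)
  -- the cycle
  set z : Chains X (N+1) := ∑ j : Fin (N+2), ((-1:ℚ)^(j:ℕ)) • gen X (ρ ∘ j.succAbove) with hz
  have hzcyc : bdry X N z = 0 := by
    rw [hz, map_sum]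
    have : ∀ j : Fin (N+2), bdry X N (((-1:ℚ)^(j:ℕ)) • gen X (ρ ∘ j.succAbove)) =
        ∑ l : Fin (N+1), (((-1:ℚ)^(j:ℕ) * (-1)^(l:ℕ)) • gen X (ρ ∘ j.succAbove ∘ l.succAbove)) := by
      intro j
      rw [map_smul, bdry_gen _ (hface j), Finset.smul_sum]
      congr 1; funext l
      rw [smul_smul]; rfl
    rw [Finset.sum_congr rfl (fun j _ => this j)]
    have hd := double_cancel (X := X) ρ
    rw [Fintype.sum_prod_type] at hd
    exact hd
  -- faces of simplices of `X` are in `X`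
  have hfc : ∀ {n : ℕ} (σ : Fin (n+1) → V), Finset.image σ Finset.univ ∈ X →
      ∀ g : Fin N.succ → Fin (n+1), Finset.image (σ ∘ g) Finset.univ ∈ X := by
    intro n σ hσ g
    obtain ⟨hsub, hne⟩ := hXT _ hσ
    apply hT
    · exact (im_comp_subset σ g).trans hsub
    · intro he
      apply hne
      apply Finset.Subset.antisymm hsub
      rw [← he]
      exact im_comp_subset σ g
  -- φ kills boundaries
  have hφb : ∀ w : Chains X (N+2), φ (bdry X (N+1) w) = 0 := by
    have hcomp : φ.comp (bdry X (N+1)) = 0 := by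
      apply Finsupp.lhom_ext
      intro σ c
      simp only [LinearMap.comp_apply, LinearMap.zero_apply]
      rw [bdry_single, map_smul, map_sum]
      have hterm : ∀ j : Fin (N+2), φ (((-1:ℚ)^(j:ℕ)) • gen X (σ.1 ∘ j.succAbove)) =
          ((-1:ℚ)^(j:ℕ)) * dv (σ.1 ∘ j.succAbove) := by
        intro j
        rw [map_smul, φ_gen _ (hfc σ.1 σ.2 j.succAbove), smul_eq_mul]
      rw [Finset.sum_congr rfl (fun j _ => hterm j)]
      -- the big matrix with a column of ones
      set A : Matrix (Fin (N+2)) (Fin (N+2)) ℚ :=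
        Matrix.of (fun l x => if x = 0 then 1 else if σ.1 l = ρ x then 1 else 0) with hA
      have hsub : ∀ j : Fin (N+2),
          A.submatrix j.succAbove Fin.succ =
            Matrix.of (fun l x : Fin (N+1) => if σ.1 (j.succAbove l) = ρ x.succ then (1:ℚ) else 0) := by
        intro j
        funext l x
        simp only [Matrix.submatrix_apply, hA, Matrix.of_apply]
        rw [if_neg (Fin.succ_ne_zero x)]
      have hdetA : A.det = 0 := by
        have hninj : ¬ Function.Injective σ.1 := by
          intro hinj
          obtain ⟨hsubT, hneT⟩ := hXT _ σ.2
          apply hneT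
          apply Finset.eq_of_subset_of_card_le hsubT
          rw [hcardT, Finset.card_image_of_injective _ hinj, Finset.card_univ, Fintype.card_fin]
        rw [Function.not_injective_iff] at hninj
        obtain ⟨j₁, j₂, hval, hne⟩ := hninj
        apply Matrix.det_zero_of_row_eq hne
        funext x
        simp only [hA, Matrix.of_apply, hval]
      have hexp := Matrix.det_succ_column_zero A
      rw [hdetA] at hexp
      have hA0 : ∀ j : Fin (N+2), A j 0 = 1 := fun j => by simp [hA]
      have : (0:ℚ) = ∑ j : Fin (N+2), (-1)^(j:ℕ) * dv (σ.1 ∘ j.succAbove) := by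
        rw [hexp]
        congr 1; funext j
        rw [hA0 j, mul_one, hsub j]
        rfl
      rw [← this, smul_zero]
    intro w
    exact congrArg (fun f => f w) hcomp
  -- φ does not kill `z`
  have hφz : φ z = 1 := by
    rw [hz, map_sum]
    have hterm : ∀ j : Fin (N+2), φ (((-1:ℚ)^(j:ℕ)) • gen X (ρ ∘ j.succAbove)) =
        ((-1:ℚ)^(j:ℕ)) * dv (ρ ∘ j.succAbove) := by
      intro j
      rw [map_smul, φ_gen _ (hface j), smul_eq_mul]
    rw [Finset.sum_congr rfl (fun j _ => hterm j)]
    have hdv0 : ∀ j : Fin (N+2), j ≠ 0 → dv (ρ ∘ j.succAbove) = 0 := by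
      intro j hj
      apply Matrix.det_eq_zero_of_row_eq_zero 0
      intro x
      simp only [Matrix.of_apply, Function.comp_apply]
      rw [if_neg]
      intro he
      have h0 : j.succAbove 0 = x.succ := hρinj he
      have : j.succAbove 0 = 0 := by
        have : (0:Fin (N+1)).castSucc < j := by
          rcases Fin.pos_iff_ne_zero.mpr hj with h
          simpa using h
        rw [Fin.succAbove_of_castSucc_lt _ _ this]
        rfl
      rw [this] at h0
      exact (Fin.succ_ne_zero x) h0.symm
    have hdv1 : dv (ρ ∘ (0 : Fin (N+2)).succAbove) = 1 := by
      have : (Matrix.of (fun l x : Fin (N+1) =>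
          if (ρ ∘ (0 : Fin (N+2)).succAbove) l = ρ x.succ then (1:ℚ) else 0)) = 1 := by
        funext l x
        simp only [Matrix.of_apply, Function.comp_apply, Fin.succAbove_zero]
        rw [Matrix.one_apply]
        by_cases h : l = x
        · exact (if_pos (by rw [h])).trans (if_pos h).symm
        · exact (if_neg (fun he => h (Fin.succ_injective _ (hρinj he)))).trans (if_neg h).symm
      rw [hdv]
      simp only
      rw [this, Matrix.det_one]
    rw [Finset.sum_eq_single 0]
    · rw [hdv1]; simp
    · intro j _ hj
      rw [hdv0 j hj, mul_zero]
    · intro h; exact absurd (Finset.mem_univ _) h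
  -- conclude
  intro hvan
  rw [homologyVanishes_iff] at hvan
  obtain ⟨w, hw⟩ := hvan z hzcyc
  rw [← hw, hφb] at hφz
  exact one_ne_zero hφz.symm

lemma mem_exampleCplx {r m : ℕ} (A : Fin r → Finset (Fin m)) (s : Finset (Fin m × Fin r)) :
    s ∈ exampleCplx A ↔ ∃ k, (∀ v ∈ s, v.2 = k) ∧ ∃ i ∈ A k, (i, k) ∉ s := by
  simp [exampleCplx]

lemma isComplex_exampleCplx {r m : ℕ} (A : Fin r → Finset (Fin m)) :
    IsComplex (exampleCplx A) := by
  intro s hs t hts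
  rw [mem_exampleCplx] at hs ⊢
  obtain ⟨k, hcoord, i, hiA, hmiss⟩ := hs
  exact ⟨k, fun v hv => hcoord v (hts hv), i, hiA, fun hmem => hmiss (hts hmem)⟩

lemma isComplex_induced {V' : Type*} {X : Set (Finset V')} (hX : IsComplex X)
    (S : Finset V') : IsComplex (induced X S) := by
  intro s hs t hts
  exact ⟨hX _ hs.1 _ hts, hts.trans hs.2⟩

lemma mem_induced {V' : Type*} {X : Set (Finset V')} {S s : Finset V'} :
    s ∈ induced X S ↔ s ∈ X ∧ s ⊆ S := Iff.rfl

/-- The splitting of a cycle into its level components, and vanishing. -/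
lemma exampleCplx_vanishing {r m d : ℕ} (hr : 1 ≤ r) (hd : 2 ≤ d)
    (A : Fin r → Finset (Fin m)) (hcardA : ∀ k, (A k).card = d)
    (S : Finset (Fin m × Fin r)) (i : ℕ) (hi : d - 1 ≤ i) :
    HomologyVanishes (induced (exampleCplx A) S) i := by
  classical
  set X := exampleCplx A with hX
  set Y := induced X S with hY
  have hYc : IsComplex Y := isComplex_induced (isComplex_exampleCplx A) S
  rw [homologyVanishes_iff]
  intro z hz
  obtain ⟨i', rfl⟩ : ∃ i', i = i' + 1 := ⟨i - 1, by omega⟩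
  -- level components
  set zc : Fin r → Chains Y (i'+2) :=
    fun k => Finsupp.filter (fun τ => (τ.1 0).2 = k) z with hzc
  have hzsum : ∑ k, zc k = z := by
    ext τ
    rw [Finset.sum_apply']
    have : ∀ k, zc k τ = if (τ.1 0).2 = k then z τ else 0 := fun k => rfl
    rw [Finset.sum_congr rfl (fun k _ => this k)]
    rw [Finset.sum_ite_eq]
    simp
  -- the region of level `k`
  set P : Fin r → Finset (Fin m × Fin r) → Prop :=
    fun k s => (∀ v ∈ s, v.2 = k) ∧ (∃ j ∈ A k, (j, k) ∉ s) ∧ s ⊆ S with hP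
  have hPY : ∀ k s, P k s → s ∈ Y := by
    intro k s hs
    exact ⟨(mem_exampleCplx A s).mpr ⟨k, hs.1, hs.2.1⟩, hs.2.2⟩
  have hPdc : ∀ k (s t : Finset (Fin m × Fin r)), P k s → t ⊆ s → P k t := by
    intro k s t hs hts
    obtain ⟨h1, ⟨j, hj, hjm⟩, h3⟩ := hs
    exact ⟨fun v hv => h1 v (hts hv), ⟨j, hj, fun hm => hjm (hts hm)⟩, hts.trans h3⟩
  -- tuples supported at level `k`
  have hlevel : ∀ {n : ℕ} (τ : Tup Y (n+1)) (v : Fin m × Fin r),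
      v ∈ Finset.image τ.1 Finset.univ → v.2 = (τ.1 0).2 := by
    intro n τ v hv
    have hmem : Finset.image τ.1 Finset.univ ∈ X ∧ Finset.image τ.1 Finset.univ ⊆ S := τ.2
    obtain ⟨k, hcoord, _⟩ := (mem_exampleCplx A _).mp hmem.1
    have h0 : (τ.1 0).2 = k := hcoord _ (Finset.mem_image_of_mem _ (Finset.mem_univ 0))
    rw [hcoord v hv, h0]
  have hreg : ∀ k, InReg (P k) (zc k) := by
    intro k τ hτ
    have hτz : τ ∈ z.support := by
      rw [hzc] at hτ
      rw [Finsupp.support_filter, Finset.mem_filter] at hτ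
      exact hτ.1
    have hτk : (τ.1 0).2 = k := by
      rw [hzc] at hτ
      rw [Finsupp.support_filter, Finset.mem_filter] at hτ
      exact hτ.2
    have hmem : Finset.image τ.1 Finset.univ ∈ X ∧ Finset.image τ.1 Finset.univ ⊆ S := τ.2
    obtain ⟨hmX, hmS⟩ := hmem
    obtain ⟨k', hcoord, j, hjA, hjm⟩ := (mem_exampleCplx A _).mp hmX
    have hkk : k' = k := by
      rw [← hτk]
      exact (hcoord _ (Finset.mem_image_of_mem _ (Finset.mem_univ 0))).symm
    subst hkk
    exact ⟨hcoord, ⟨j, hjA, hjm⟩, hmS⟩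
  -- each component is a cycle
  have hcyc : ∀ k, bdry Y (i'+1) (zc k) = 0 := by
    intro k
    have hsum0 : ∑ l, bdry Y (i'+1) (zc l) = 0 := by
      rw [← map_sum, hzsum, hz]
    have hkey : ∀ l, ∀ τ ∈ (bdry Y (i'+1) (zc l)).support, (τ.1 0).2 = l := by
      intro l τ hτ
      have hInR : InReg (P l) (bdry Y (i'+1) (zc l)) := InReg_bdry (hPdc l) (hreg l)
      have := (hInR τ hτ).1 (τ.1 0) (Finset.mem_image_of_mem _ (Finset.mem_univ 0))
      exact this
    ext τ
    by_cases hτ : τ ∈ (bdry Y (i'+1) (zc k)).support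
    · have hτk := hkey k τ hτ
      have h0 : ∑ l, (bdry Y (i'+1) (zc l)) τ = 0 := by
        rw [← Finset.sum_apply', hsum0]; rfl
      rw [Finset.sum_eq_single k] at h0
      · rw [h0]; rfl
      · intro l _ hlk
        by_contra hne
        have : τ ∈ (bdry Y (i'+1) (zc l)).support := Finsupp.mem_support_iff.mpr hne
        exact hlk ((hkey l τ this).symm.trans hτk)
      · intro h; exact absurd (Finset.mem_univ _) h
    · rw [Finsupp.notMem_support_iff.mp hτ]; rfl
  -- contract each component
  have hcontract : ∀ k, ∃ w : Chains Y (i'+3), bdry Y (i'+2) w = zc k := by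
    intro k
    by_cases hb : ∃ w ∈ S, w.2 = k ∧ w.1 ∉ A k
    · obtain ⟨w, hwS, hwk, hwA⟩ := hb
      obtain ⟨u, hu, _⟩ := cone_contract hYc (P k) (hPY k) w
        (fun s hs => by
          obtain ⟨h1, ⟨j, hj, hjm⟩, h3⟩ := hs
          refine ⟨?_, ⟨j, hj, ?_⟩, Finset.insert_subset hwS h3⟩
          · intro v hv
            rcases Finset.mem_insert.mp hv with rfl | hv'
            exacts [hwk, h1 v hv']
          · intro hm
            rcases Finset.mem_insert.mp hm with he | hv'
            · exact hwA (by rw [← he]; simpa using hj)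
            · exact hjm hv')
        (zc k) (hcyc k) (hreg k)
      exact ⟨u, hu⟩
    · by_cases hc : ∃ j ∈ A k, (j, k) ∉ S
      · obtain ⟨j₀, hj₀, hj₀S⟩ := hc
        by_cases hSk : ∃ w ∈ S, w.2 = k
        · obtain ⟨w, hwS, hwk⟩ := hSk
          obtain ⟨u, hu, _⟩ := cone_contract hYc (P k) (hPY k) w
            (fun s hs => by
              obtain ⟨h1, _, h3⟩ := hs
              refine ⟨?_, ⟨j₀, hj₀, ?_⟩, Finset.insert_subset hwS h3⟩
              · intro v hv
                rcases Finset.mem_insert.mp hv with rfl | hv'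
                exacts [hwk, h1 v hv']
              · intro hm
                rcases Finset.mem_insert.mp hm with he | hv'
                · exact hj₀S (he ▸ hwS)
                · exact hj₀S (h3 hv'))
            (zc k) (hcyc k) (hreg k)
          exact ⟨u, hu⟩
        · push_neg at hSk
          obtain ⟨u, hu, _⟩ := small_contract hYc 0 (P k) ∅ (hPY k) (hPdc k)
            (fun s hs => by
              intro v hv
              exact absurd (hs.1 v hv) (hSk v (hs.2.2 hv)))
            (by simp) (i'+1) (by omega) (zc k) (hcyc k) (hreg k)
          exact ⟨u, hu⟩
      · push_neg at hb hc
        obtain ⟨u, hu, _⟩ := small_contract hYc d (P k)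
          ((A k).image (fun j => (j, k))) (hPY k) (hPdc k)
          (fun s hs => by
            intro v hv
            have hv2 := hs.1 v hv
            have hv1 : v.1 ∈ A k := hb v (hs.2.2 hv) hv2
            rw [Finset.mem_image]
            exact ⟨v.1, hv1, by rw [← hv2]⟩)
          (by
            rw [Finset.card_image_of_injective _
              (fun a b hab => by simpa using (Prod.mk.injEq _ _ _ _ ▸ hab : a = b ∧ k = k).1)]
            exact le_of_eq (hcardA k))
          (i'+1) (by omega) (zc k) (hcyc k) (hreg k)
        exact ⟨u, hu⟩
  choose w hw using hcontract
  exact ⟨∑ k, w k, by rw [map_sum, Finset.sum_congr rfl (fun k _ => hw k), hzsum]⟩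

lemma exists_enum {α : Type*} [DecidableEq α] (s : Finset α) {n : ℕ} (h : s.card = n) :
    ∃ f : Fin n → α, Function.Injective f ∧ Finset.image f Finset.univ = s := by
  classical
  obtain ⟨l, hl, hlen⟩ : ∃ l : List α, l.Nodup ∧ l.length = n ∧ l.toFinset = s := by
    refine ⟨s.toList, Finset.nodup_toList s, ?_, by simp⟩
    rw [Finset.length_toList, h]
  obtain ⟨hlen, htf⟩ := hlen
  refine ⟨fun j => l.get (Fin.cast hlen.symm j), ?_, ?_⟩
  · intro a b hab
    have := List.nodup_iff_injective_get.mp hl hab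
    simpa [Fin.ext_iff] using this
  · ext x
    simp only [Finset.mem_image, Finset.mem_univ, true_and]
    rw [← htf, List.mem_toFinset]
    constructor
    · rintro ⟨j, rfl⟩; exact l.get_mem _
    · intro hx
      obtain ⟨j, hj⟩ := List.mem_iff_get.mp hx
      exact ⟨Fin.cast hlen j, by simpa using hj⟩

lemma exampleCplx_nonvanishing {r m N : ℕ} (A : Fin r → Finset (Fin m)) (k0 : Fin r)
    (hcard : (A k0).card = N + 2) :
    ¬ HomologyVanishes
      (induced (exampleCplx A) ((A k0).image (fun j => (j, k0)))) N := by
  classical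
  set S₀ : Finset (Fin m × Fin r) := (A k0).image (fun j => (j, k0)) with hS₀
  obtain ⟨f, hfinj, hfim⟩ := exists_enum (A k0) hcard
  apply boundary_nonvanish (T := S₀) (ρ := fun j => (f j, k0))
  · intro a b hab
    exact hfinj (congrArg Prod.fst hab)
  · rw [hS₀, ← hfim, Finset.image_image]
    rfl
  · intro s hs
    refine ⟨hs.2, ?_⟩
    intro he
    have hS₀X : S₀ ∈ exampleCplx A := he ▸ hs.1
    obtain ⟨k', hcoord, j, hjA, hjm⟩ := (mem_exampleCplx A _).mp hS₀X
    obtain ⟨a, ha⟩ := Finset.card_pos.mp (by rw [hcard]; omega : 0 < (A k0).card)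
    have haS : (a, k0) ∈ S₀ := Finset.mem_image_of_mem _ ha
    have hk' : k' = k0 := (hcoord _ haS).symm
    subst hk'
    exact hjm (Finset.mem_image_of_mem _ hjA)
  · intro s hsub hne
    refine ⟨(mem_exampleCplx A _).mpr ⟨k0, ?_, ?_⟩, hsub⟩
    · intro v hv
      obtain ⟨a, _, rfl⟩ := Finset.mem_image.mp (hsub hv)
      rfl
    · obtain ⟨v, hvS, hvs⟩ := Finset.exists_of_ssubset (lt_of_le_of_ne hsub hne)
      obtain ⟨a, haA, rfl⟩ := Finset.mem_image.mp hvS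
      exact ⟨a, haA, hvs⟩

lemma leray_exampleCplx {r m d : ℕ} (hr : 1 ≤ r) (hd : 2 ≤ d)
    (A : Fin r → Finset (Fin m)) (hcardA : ∀ k, (A k).card = d) :
    lerayNumber (exampleCplx A) = d - 1 := by
  classical
  obtain ⟨N, rfl⟩ : ∃ N, d = N + 2 := ⟨d - 2, by omega⟩
  have k0 : Fin r := ⟨0, hr⟩
  have h1 : (N + 1) ∈ {e | ∀ S : Finset (Fin m × Fin r), ∀ i, e ≤ i →
      HomologyVanishes (induced (exampleCplx A) S) i} := by
    intro S i hi
    exact exampleCplx_vanishing hr hd A hcardA S i (by omega)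
  have h2 : ∀ e ∈ {e | ∀ S : Finset (Fin m × Fin r), ∀ i, e ≤ i →
      HomologyVanishes (induced (exampleCplx A) S) i}, N + 1 ≤ e := by
    intro e he
    by_contra hlt
    push_neg at hlt
    exact exampleCplx_nonvanishing A k0 (hcardA k0)
      (he ((A k0).image (fun j => (j, k0))) N (by omega))
  have : lerayNumber (exampleCplx A) = N + 1 :=
    le_antisymm (Nat.sInf_le h1) (le_csInf ⟨_, h1⟩ h2)
  rw [this]
  omega

lemma imageComplex_exampleCplx {r m : ℕ} (A : Fin r → Finset (Fin m))
    (hA : ∀ k, (A k).Nonempty) (hcover : ∀ i : Fin m, ∃ k, i ∈ A k) :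
    imageComplex (Prod.fst : Fin m × Fin r → Fin m) (exampleCplx A) =
      {t : Finset (Fin m) | t ≠ Finset.univ} := by
  classical
  ext t
  constructor
  · rintro ⟨s, hs, rfl⟩
    obtain ⟨k, hcoord, j, hjA, hjm⟩ := (mem_exampleCplx A _).mp hs
    intro huniv
    have : j ∈ s.image Prod.fst := huniv ▸ Finset.mem_univ j
    obtain ⟨v, hvs, hv1⟩ := Finset.mem_image.mp this
    apply hjm
    have hv2 : v.2 = k := hcoord v hvs
    have : v = (j, k) := Prod.ext hv1 hv2
    rwa [← this]
  · intro ht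
    have : ∃ j : Fin m, j ∉ t := by
      by_contra hc
      push_neg at hc
      exact ht (Finset.eq_univ_iff_forall.mpr hc)
    obtain ⟨j, hj⟩ := this
    obtain ⟨k, hk⟩ := hcover j
    refine ⟨t.image (fun i => (i, k)), (mem_exampleCplx A _).mpr ⟨k, ?_, j, hk, ?_⟩, ?_⟩
    · intro v hv
      obtain ⟨a, _, rfl⟩ := Finset.mem_image.mp hv
      rfl
    · intro hm
      obtain ⟨a, ha, hae⟩ := Finset.mem_image.mp hm
      have : a = j := congrArg Prod.fst hae
      exact hj (this ▸ ha)
    · rw [Finset.image_image]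
      have : (Prod.fst ∘ fun i : Fin m => (i, k)) = id := rfl
      rw [this, Finset.image_id]

lemma isComplex_bdryCplx (m : ℕ) :
    IsComplex {t : Finset (Fin m) | t ≠ Finset.univ} := by
  intro s hs t hts
  intro he
  exact hs (Finset.eq_univ_iff_forall.mpr fun x => hts (he ▸ Finset.mem_univ x))

lemma leray_bdryCplx (N' : ℕ) :
    lerayNumber {t : Finset (Fin (N' + 2)) | t ≠ Finset.univ} = N' + 1 := by
  classical
  set B := {t : Finset (Fin (N' + 2)) | t ≠ Finset.univ} with hB
  have hBc : IsComplex B := isComplex_bdryCplx _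
  have h1 : (N' + 1) ∈ {e | ∀ S : Finset (Fin (N' + 2)), ∀ i, e ≤ i →
      HomologyVanishes (induced B S) i} := by
    intro S i hi
    rw [homologyVanishes_iff]
    intro z hz
    obtain ⟨w, hw, _⟩ := small_contract (isComplex_induced hBc S) (N' + 2)
      (fun s => s ∈ induced B S) Finset.univ (fun s hs => hs)
      (fun s t hs hts => (isComplex_induced hBc S) _ hs _ hts)
      (fun s _ => Finset.subset_univ s)
      (by simp) i (by omega) z hz (fun τ _ => τ.2)
    exact ⟨w, hw⟩
  have h2 : ∀ e ∈ {e | ∀ S : Finset (Fin (N' + 2)), ∀ i, e ≤ i →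
      HomologyVanishes (induced B S) i}, N' + 1 ≤ e := by
    intro e he
    by_contra hlt
    push_neg at hlt
    have hvan := he Finset.univ N' (by omega)
    apply boundary_nonvanish (X := induced B Finset.univ) (T := Finset.univ)
      (ρ := (id : Fin (N' + 2) → Fin (N' + 2)))
      (fun a b hab => hab) (by simp)
      ?_ ?_ hvan
    · intro s hs
      exact ⟨Finset.subset_univ s, hs.1⟩
    · intro s _ hne
      exact ⟨hne, Finset.subset_univ s⟩
  exact le_antisymm (Nat.sInf_le h1) (le_csInf ⟨_, h1⟩ h2)

lemma projPt_fst_eq {r m : ℕ} (f : Fin m × Fin r → ℝ) (i : Fin m) :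
    projPt Prod.fst f i = ∑ j : Fin r, f (i, j) := by
  rw [projPt]
  have : Finset.univ.filter (fun v : Fin m × Fin r => v.1 = i) = {i} ×ˢ Finset.univ := by
    ext ⟨a, b⟩
    simp [Finset.mem_product, eq_comm]
  rw [this, Finset.sum_product]
  simp

lemma geom_level {r m : ℕ} (A : Fin r → Finset (Fin m)) (y : geomPt (exampleCplx A)) :
    ∃ k : Fin r, ∀ v, y.1 v ≠ 0 → v.2 = k := by
  obtain ⟨_, _, s, hsX, hiff⟩ := y.2
  obtain ⟨k, hcoord, _⟩ := (mem_exampleCplx A s).mp hsX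
  exact ⟨k, fun v hv => hcoord v ((hiff v).mp hv)⟩

lemma geom_desc {r m : ℕ} (A : Fin r → Finset (Fin m)) (y : geomPt (exampleCplx A))
    (k : Fin r) (hk : ∀ v, y.1 v ≠ 0 → v.2 = k) (i : Fin m) (j : Fin r) :
    y.1 (i, j) = if j = k then projPt Prod.fst y.1 i else 0 := by
  by_cases hj : j = k
  · subst hj
    rw [if_pos rfl, projPt_fst_eq]
    rw [Finset.sum_eq_single j]
    · intro b _ hb
      by_contra hne
      exact hb (hk (i, b) hne)
    · intro h; exact absurd (Finset.mem_univ _) h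
  · rw [if_neg hj]
    by_contra hne
    exact hj (hk (i, j) hne)

lemma fiber_le {r m : ℕ} (A : Fin r → Finset (Fin m)) (x : geomPt (exampleCplx A)) :
    {y : geomPt (exampleCplx A) |
      projPt (Prod.fst : Fin m × Fin r → Fin m) y.1 =
        projPt (Prod.fst : Fin m × Fin r → Fin m) x.1}.ncard ≤ r := by
  classical
  set Fib := {y : geomPt (exampleCplx A) |
      projPt (Prod.fst : Fin m × Fin r → Fin m) y.1 =
        projPt (Prod.fst : Fin m × Fin r → Fin m) x.1} with hFib
  have hex : ∀ y : geomPt (exampleCplx A), ∃ k, ∀ v, y.1 v ≠ 0 → v.2 = k := geom_level A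
  set lev : geomPt (exampleCplx A) → Fin r := fun y => Classical.choose (hex y) with hlevdef
  have hlev : ∀ y, ∀ v, y.1 v ≠ 0 → v.2 = lev y := fun y => Classical.choose_spec (hex y)
  have hinj : Set.InjOn lev Fib := by
    intro y hy y' hy' he
    apply Subtype.ext; funext v
    rcases v with ⟨i, j⟩
    rw [geom_desc A y _ (hlev y) i j, geom_desc A y' _ (hlev y') i j, he]
    have hyx : projPt Prod.fst y.1 = projPt Prod.fst x.1 := hy
    have hy'x : projPt Prod.fst y'.1 = projPt Prod.fst x.1 := hy'
    rw [hyx, hy'x]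
  calc Fib.ncard ≤ (Set.univ : Set (Fin r)).ncard :=
        Set.ncard_le_ncard_of_injOn lev (fun a _ => Set.mem_univ _) hinj Set.finite_univ
    _ = r := by rw [Set.ncard_univ]; simp

lemma fiber_exact {r m d : ℕ} (hr : 1 ≤ r) (hd : 2 ≤ d)
    (A : Fin r → Finset (Fin m)) (hcardA : ∀ k, (A k).card = d) :
    ∃ x : geomPt (exampleCplx A),
      {y : geomPt (exampleCplx A) |
        projPt (Prod.fst : Fin m × Fin r → Fin m) y.1 =
          projPt (Prod.fst : Fin m × Fin r → Fin m) x.1}.ncard = r := by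
  classical
  set k0 : Fin r := ⟨0, hr⟩ with hk0
  obtain ⟨i₀, hi₀⟩ := Finset.card_pos.mp (by rw [hcardA k0]; omega : 0 < (A k0).card)
  have hgt1 : ∀ l : Fin r, ∃ b ∈ A l, b ≠ i₀ := by
    intro l
    exact Finset.exists_mem_ne (by rw [hcardA l]; omega) i₀
  -- the family of fiber points
  have he : ∀ l : Fin r, (fun v : Fin m × Fin r => if v = (i₀, l) then (1:ℝ) else 0) ∈
      {f : Fin m × Fin r → ℝ | (∀ v, 0 ≤ f v) ∧ (∑ v, f v) = 1 ∧
        ∃ s ∈ exampleCplx A, ∀ v, f v ≠ 0 ↔ v ∈ s} := by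
    intro l
    refine ⟨fun v => by positivity, ?_, {(i₀, l)}, ?_, ?_⟩
    · rw [Finset.sum_ite_eq' Finset.univ ((i₀, l) : Fin m × Fin r) (fun _ => (1:ℝ))]
      simp
    · obtain ⟨i₁, hi₁A, hi₁⟩ := hgt1 l
      refine (mem_exampleCplx A _).mpr ⟨l, ?_, i₁, hi₁A, ?_⟩
      · intro v hv
        rw [Finset.mem_singleton] at hv
        rw [hv]
      · rw [Finset.mem_singleton]
        intro hc
        exact hi₁ (congrArg Prod.fst hc)
    · intro v
      rw [Finset.mem_singleton]
      by_cases hv : v = (i₀, l) <;> simp [hv]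
  set e : Fin r → geomPt (exampleCplx A) := fun l => ⟨_, he l⟩ with hedef
  have heval : ∀ l v, (e l).1 v = if v = (i₀, l) then (1:ℝ) else 0 := fun l v => rfl
  have hproj : ∀ l i, projPt Prod.fst (e l).1 i = if i = i₀ then (1:ℝ) else 0 := by
    intro l i
    rw [projPt_fst_eq]
    by_cases h : i = i₀
    · subst h
      rw [if_pos rfl, Finset.sum_eq_single l]
      · rw [heval, if_pos rfl]
      · intro b _ hb
        rw [heval, if_neg (fun hc => hb (congrArg Prod.snd hc))]
      · intro h; exact absurd (Finset.mem_univ _) h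
    · rw [if_neg h]
      apply Finset.sum_eq_zero
      intro j _
      rw [heval, if_neg (fun hc => h (congrArg Prod.fst hc))]
  have heinj : Function.Injective e := by
    intro l l' hll
    by_contra hne
    have h1 : (e l).1 (i₀, l) = 1 := by rw [heval, if_pos rfl]
    have h2 : (e l').1 (i₀, l) = 0 := by
      rw [heval, if_neg (fun hc => hne (by simpa using congrArg Prod.snd hc))]
    rw [hll, h2] at h1
    exact one_ne_zero h1.symm
  refine ⟨e k0, ?_⟩
  have hset : {y : geomPt (exampleCplx A) |
      projPt (Prod.fst : Fin m × Fin r → Fin m) y.1 =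
        projPt (Prod.fst : Fin m × Fin r → Fin m) (e k0).1} = Set.range e := by
    ext y
    constructor
    · intro hy
      have hyx : projPt Prod.fst y.1 = projPt Prod.fst (e k0).1 := hy
      obtain ⟨k, hk⟩ := geom_level A y
      refine ⟨k, ?_⟩
      apply Subtype.ext; funext v
      rcases v with ⟨i, j⟩
      rw [heval, geom_desc A y k hk i j, hyx, hproj]
      by_cases hj : j = k
      · subst hj
        rw [if_pos rfl]
        by_cases hi : i = i₀
        · subst hi; rw [if_pos rfl, if_pos rfl]
        · rw [if_neg hi, if_neg (fun hc => hi (congrArg Prod.fst hc))]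
      · rw [if_neg hj, if_neg (fun hc => hj ((congrArg Prod.snd hc)))]
    · rintro ⟨l, rfl⟩
      show projPt Prod.fst (e l).1 = projPt Prod.fst (e k0).1
      funext i
      rw [hproj, hproj]
  rw [hset, ← Set.image_univ, Set.ncard_image_of_injective _ heinj, Set.ncard_univ]
  simp


/-- in the example, `L(X) = d - 1`, the fibers of `π` on `|X|` have at most `r`
points with some fiber having exactly `r` points (i.e. `r(X,π) = r`), and the bound
`L(π(X)) ≤ r·L(X) + r - 1` is attained with equality. -/
theorem stmt14 (r d m : ℕ) (hr : 1 ≤ r) (hd : 2 ≤ d) (hm : m = r * d)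
    (A : Fin r → Finset (Fin m)) (hcardA : ∀ k, (A k).card = d)
    (hdisjA : Pairwise fun k l => Disjoint (A k) (A l))
    (hcover : ∀ i : Fin m, ∃ k, i ∈ A k) :
    lerayNumber (exampleCplx A) = d - 1 ∧
    (∀ x : geomPt (exampleCplx A),
      {y : geomPt (exampleCplx A) |
        projPt (Prod.fst : Fin m × Fin r → Fin m) y.1 =
          projPt (Prod.fst : Fin m × Fin r → Fin m) x.1}.ncard ≤ r) ∧
    (∃ x : geomPt (exampleCplx A),
      {y : geomPt (exampleCplx A) |
        projPt (Prod.fst : Fin m × Fin r → Fin m) y.1 =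
          projPt (Prod.fst : Fin m × Fin r → Fin m) x.1}.ncard = r) ∧
    lerayNumber (imageComplex (Prod.fst : Fin m × Fin r → Fin m) (exampleCplx A)) =
      r * lerayNumber (exampleCplx A) + r - 1 := by
  have hA : ∀ k, (A k).Nonempty := fun k =>
    Finset.card_pos.mp (by rw [hcardA k]; omega)
  refine ⟨leray_exampleCplx hr hd A hcardA, fun x => fiber_le A x,
    fiber_exact hr hd A hcardA, ?_⟩
  rw [leray_exampleCplx hr hd A hcardA]
  rw [imageComplex_exampleCplx A hA hcover]
  have hm2 : 2 ≤ m := by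
    rw [hm]
    calc 2 ≤ d := hd
    _ = 1 * d := (one_mul d).symm
    _ ≤ r * d := Nat.mul_le_mul_right d hr
  obtain ⟨N', hm'⟩ : ∃ N', m = N' + 2 := ⟨m - 2, by omega⟩
  subst hm'
  rw [leray_bdryCplx N']
  have key : r * (d - 1) + r = r * d := by
    obtain ⟨d', rfl⟩ : ∃ d', d = d' + 1 := ⟨d - 1, by omega⟩
    simp [Nat.succ_sub_one, Nat.mul_succ]
  generalize ha : r * (d - 1) = a at *
  generalize hb : r * d = b at *
  omega
end

section
/- Helly's theorem: if K is a finite family of compact convex sets in ℝ^d such that every subfamily of K of cardinality at most d+1 has nonempty intersection, then ⋂K ≠ ∅. Equivalently, the Helly number of the family of compact convex sets in ℝ^d is at most d+1. -/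
/-- The Helly number of a family of sets: the least positive `h` such that every finite
subfamily, all of whose subfamilies of cardinality `≤ h` have a common point, has a common
point. -/
noncomputable def hellyNumber {α : Type*} (G : Set (Set α)) : ℕ :=
  sInf {h | 0 < h ∧ ∀ K : Finset (Set α), ↑K ⊆ G →
    (∀ K' ⊆ K, K'.card ≤ h → (⋂₀ (K' : Set (Set α))).Nonempty) →
    (⋂₀ (K : Set (Set α))).Nonempty}

/-- `G` is an `(F,r)`-family: every intersection of a (nonempty) finite subfamily of `G` is a
union of at most `r` pairwise disjoint members of `F`. -/
def IsFrFamily {α : Type*} (F : Set (Set α)) (r : ℕ) (G : Set (Set α)) : Prop :=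
  ∀ G' : Finset (Set α), ↑G' ⊆ G → G'.Nonempty →
    ∃ D : Finset (Set α), ↑D ⊆ F ∧ D.card ≤ r ∧
      (D : Set (Set α)).Pairwise Disjoint ∧ ⋂₀ (G' : Set (Set α)) = ⋃₀ (D : Set (Set α))

/-- Helly's theorem: a finite family of compact convex sets in `ℝ^d`, every
`≤ d+1` of which have a common point, has a common point; equivalently, the Helly number of
the family of compact convex sets in `ℝ^d` is at most `d + 1`. -/
theorem stmt16 {d : ℕ} :
    (∀ K : Finset (Set (EuclideanSpace ℝ (Fin d))),
      (∀ A ∈ K, IsCompact A ∧ Convex ℝ A) →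
      (∀ K' ⊆ K, K'.card ≤ d + 1 → (⋂₀ (K' : Set (Set (EuclideanSpace ℝ (Fin d))))).Nonempty) →
      (⋂₀ (K : Set (Set (EuclideanSpace ℝ (Fin d))))).Nonempty) ∧
    hellyNumber {A : Set (EuclideanSpace ℝ (Fin d)) | IsCompact A ∧ Convex ℝ A} ≤ d + 1 := by
  have key : ∀ K : Finset (Set (EuclideanSpace ℝ (Fin d))),
      (∀ A ∈ K, IsCompact A ∧ Convex ℝ A) →
      (∀ K' ⊆ K, K'.card ≤ d + 1 → (⋂₀ (K' : Set (Set (EuclideanSpace ℝ (Fin d))))).Nonempty) →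
      (⋂₀ (K : Set (Set (EuclideanSpace ℝ (Fin d))))).Nonempty := by
    intro K hc hi
    apply Convex.helly_theorem_set' (𝕜 := ℝ) (fun X hX => (hc X hX).2)
    intro G hG hGc
    exact hi G hG (by simpa [finrank_euclideanSpace_fin] using hGc)
  refine ⟨key, Nat.sInf_le ⟨Nat.succ_pos d, fun K hK hi => key K (fun A hA => hK hA) hi⟩⟩
end

section
/- Let σ_2 ∈ X_2, …, σ_k ∈ X_k be simplices of subcomplexes X_2,…,X_k of the join V_1*⋯*V_m, and set σ̃_i = ⋃_{t ∈ π(σ_i)} V_t. Then the generalized multiple point complex M(X_1, σ_2, …, σ_k) (treating each σ_i as a full simplex complex) is isomorphic to the induced subcomplex X_1[⋂_{i=2}^k σ̃_i]. -/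
/-- The generalized multiple point complex `M(X_1,…,X_k)`. Its vertices are pairs
`(i, w)` with `w ∈ V_i^k` (`V_i = p⁻¹(i)`); a finset of such vertices is a simplex iff the
levels `i` are pairwise distinct and, for each coordinate `s`, the set of `s`-th components
is a simplex of `X_s`. -/
def Mcplx {V : Type*} [DecidableEq V] {m k : ℕ} (p : V → Fin m)
    (Xs : Fin k → Set (Finset V)) :
    Set (Finset ((i : Fin m) × {w : Fin k → V // ∀ s, p (w s) = i})) :=
  {T | (∀ w ∈ T, ∀ w' ∈ T, w.1 = w'.1 → w = w') ∧
    ∀ s : Fin k, T.image (fun w => w.2.1 s) ∈ Xs s}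

/-- A simplicial isomorphism of `X` onto `Y` induced by a vertex map `f`: `f` is injective on
vertices of `X`, maps simplices of `X` to simplices of `Y`, and every simplex of `Y` is the
image of a simplex of `X`. -/
def IsSimplicialIso {A B : Type*} [DecidableEq A] [DecidableEq B] (f : A → B)
    (X : Set (Finset A)) (Y : Set (Finset B)) : Prop :=
  Set.InjOn f {a : A | {a} ∈ X} ∧ (∀ s ∈ X, s.image f ∈ Y) ∧
    (∀ t ∈ Y, ∃ s ∈ X, s.image f = t)


/-- Auxiliary vertex map for `stmt17`: sends `v` to the vertex of the multiple point
complex whose `0`-th coordinate is `v` and whose `(j+1)`-th coordinate is some element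
of `σs j` in the same fiber of `p` as `v` (if one exists, else `v`). -/
noncomputable def stmt17aux {V : Type*} [DecidableEq V] {m k : ℕ} (p : V → Fin m)
    (σs : Fin k → Finset V) (v : V) :
    (i : Fin m) × {w : Fin (k + 1) → V // ∀ s, p (w s) = i} :=
  ⟨p v, ⟨Fin.cons v (fun j => if h : ∃ u ∈ σs j, p u = p v then h.choose else v), by
    intro s
    refine Fin.cases ?_ (fun j => ?_) s
    · simp
    · simp only [Fin.cons_succ]
      split_ifs with h
      · exact h.choose_spec.2
      · rfl⟩⟩

/-- for simplices `σ_2 ∈ X_2, …, σ_k ∈ X_k` (taken with all their faces), the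
generalized multiple point complex `M(X_1, σ_2, …, σ_k)` is isomorphic to the induced
subcomplex of `X_1` on the vertex set `⋂_i σ̃_i`, where `σ̃_i = ⋃_{t ∈ π(σ_i)} V_t`. -/
theorem stmt17 {V : Type*} [DecidableEq V] {m k : ℕ} (p : V → Fin m)
    (X1 : Set (Finset V)) (hX1 : IsComplex X1)
    (hX1join : ∀ s ∈ X1, ∀ v ∈ s, ∀ w ∈ s, p v = p w → v = w)
    (σs : Fin k → Finset V)
    (hσjoin : ∀ j, ∀ v ∈ σs j, ∀ w ∈ σs j, p v = p w → v = w) :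
    ∃ f, IsSimplicialIso f
      (Mcplx p (Fin.cons X1 (fun j : Fin k => {t : Finset V | t ⊆ σs j})))
      {s ∈ X1 | ∀ v ∈ s, ∀ j : Fin k, p v ∈ (σs j).image p} := by
  classical
  refine ⟨fun w => w.2.1 0, ?_, ?_, ?_⟩
  · -- injectivity on vertices
    rintro ⟨i, w, hw⟩ ha ⟨i', w', hw'⟩ ha' hf
    simp only [Set.mem_setOf_eq, Mcplx] at ha ha'
    have hf' : w 0 = w' 0 := hf
    have hii : i = i' := by rw [← hw 0, ← hw' 0, hf']
    subst hii
    have hmem : ∀ j : Fin k, w j.succ ∈ σs j := by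
      intro j
      have := ha.2 j.succ
      simp only [Fin.cons_succ, Set.mem_setOf_eq, Finset.image_singleton,
        Finset.singleton_subset_iff] at this
      exact this
    have hmem' : ∀ j : Fin k, w' j.succ ∈ σs j := by
      intro j
      have := ha'.2 j.succ
      simp only [Fin.cons_succ, Set.mem_setOf_eq, Finset.image_singleton,
        Finset.singleton_subset_iff] at this
      exact this
    have hww : w = w' := by
      funext s
      refine Fin.cases hf' (fun j => ?_) s
      exact hσjoin j _ (hmem j) _ (hmem' j) (by rw [hw j.succ, hw' j.succ])
    subst hww
    rfl
  · -- simplices map to simplices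
    rintro T ⟨hdist, hcoord⟩
    refine ⟨?_, ?_⟩
    · have := hcoord 0
      simpa using this
    · intro v hv j
      simp only [Finset.mem_image] at hv
      obtain ⟨w, hwT, rfl⟩ := hv
      have h1 : w.2.1 j.succ ∈ σs j := by
        have := hcoord j.succ
        simp only [Fin.cons_succ, Set.mem_setOf_eq] at this
        exact this (Finset.mem_image_of_mem _ hwT)
      exact Finset.mem_image.mpr ⟨w.2.1 j.succ, h1, by rw [w.2.2 j.succ, w.2.2 0]⟩
  · -- surjectivity on simplices
    rintro t ⟨ht1, ht2⟩
    refine ⟨t.image (stmt17aux p σs), ⟨?_, ?_⟩, ?_⟩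
    · intro w hw w' hw' hlev
      simp only [Finset.mem_image] at hw hw'
      obtain ⟨v, hv, rfl⟩ := hw
      obtain ⟨v', hv', rfl⟩ := hw'
      have hpp : p v = p v' := hlev
      rw [hX1join t ht1 v hv v' hv' hpp]
    · intro s
      refine Fin.cases ?_ (fun j => ?_) s
      · rw [Finset.image_image]
        have heq : t.image ((fun w : (i : Fin m) × {w : Fin (k + 1) → V // ∀ s, p (w s) = i}
            => w.2.1 0) ∘ stmt17aux p σs) = t := by
          rw [Finset.image_congr (g := id) (fun v _ => by simp [stmt17aux])]
          exact Finset.image_id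
        rw [heq]
        simpa using ht1
      · simp only [Fin.cons_succ, Set.mem_setOf_eq, Finset.image_image]
        intro x hx
        simp only [Finset.mem_image, Function.comp_apply] at hx
        obtain ⟨v, hv, rfl⟩ := hx
        have hex : ∃ u ∈ σs j, p u = p v := by
          have := ht2 v hv j
          simp only [Finset.mem_image] at this
          obtain ⟨u, hu, hpu⟩ := this
          exact ⟨u, hu, hpu⟩
        simp only [stmt17aux, Fin.cons_succ, dif_pos hex]
        exact hex.choose_spec.1
    · rw [Finset.image_image]
      rw [Finset.image_congr (g := id) (fun v _ => by simp [stmt17aux])]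
      exact Finset.image_id
end
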